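/- Let G : ℂ → ℂ be entire with, for every ε > 0, |G(z)| ≤ C_ε·exp(ε|z|²) for all z ∈ ℂ (i.e., G ∈ A_{2,0}(ℂ)), let χ > −1 and ϖ ∈ ℝ, ϖ ≠ 0. Then the limit lim_{ε→0+} ∫_0^∞ x^χ·exp(iϖx²)·exp(−εx²)·G(x) dx exists. -/

import Mathlib

/-!
Substituting `x = exp w` turns the integral into `∫_ℝ H_ε(s) ds`, where `H_ε` is entire in `w`
and `‖H_ε(s + iy)‖ = exp ((χ + 1) s - e^{2s} (ϖ sin 2y + ε cos 2y)) ‖G(e^{s+iy})‖`.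
For `ε > 0` this decays like `exp ((χ + 1) s - c e^{2s})`, `c > 0`, uniformly on the strip
between the real axis and `Im w = θ`, where `θ = ±π/8` has the sign of `ϖ`, so Cauchy's theorem moves the
integral to the line `Im w = θ`. On that line the oscillating factor `exp (iϖx²)` has become
the Gaussian decay `exp (-ϖ sin 2θ · e^{2s})`, which dominates `G` uniformly in `ε ≥ 0`, and
dominated convergence lets `ε → 0`.
-/

open MeasureTheory Real Set Filter Topology Complex Interval

section ExpSubstitution

variable {E : Type*} [NormedAddCommGroup E] [NormedSpace ℝ E]

theorem integral_Ioi_zero_eq_integral_exp_smul_comp_exp (g : ℝ → E) :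
    ∫ x in Ioi 0, g x = ∫ s, Real.exp s • g (Real.exp s) := by
  simpa [abs_of_pos (Real.exp_pos _)] using integral_image_eq_integral_abs_deriv_smul
    MeasurableSet.univ (fun x _ ↦ (Real.hasDerivAt_exp x).hasDerivWithinAt)
    Real.exp_injective.injOn g

theorem integrableOn_Ioi_zero_iff_integrable_exp_smul_comp_exp (g : ℝ → E) :
    IntegrableOn g (Ioi 0) ↔ Integrable fun s ↦ Real.exp s • g (Real.exp s) := by
  simpa [abs_of_pos (Real.exp_pos _)] using integrableOn_image_iff_integrableOn_abs_deriv_smul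
    MeasurableSet.univ (fun x _ ↦ (Real.hasDerivAt_exp x).hasDerivWithinAt)
    Real.exp_injective.injOn g

end ExpSubstitution

theorem integrable_exp_mul_sub_mul_exp_two_mul {a b : ℝ} (ha : 0 < a) (hb : 0 < b) :
    Integrable fun s : ℝ ↦ Real.exp (a * s - b * Real.exp (2 * s)) := by
  have h := (integrableOn_Ioi_zero_iff_integrable_exp_smul_comp_exp _).mp
    (integrableOn_rpow_mul_exp_neg_mul_sq hb (by linarith : -1 < a - 1))
  refine h.congr (ae_of_all _ fun s ↦ ?_)
  simp only [smul_eq_mul, Real.rpow_def_of_pos (Real.exp_pos s), Real.log_exp, ← Real.exp_add,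
    ← Real.exp_nat_mul]
  ring_nf

theorem tendsto_exp_mul_sub_mul_exp_two_mul_cocompact {a b : ℝ} (ha : 0 < a) (hb : 0 < b) :
    Tendsto (fun s : ℝ ↦ Real.exp (a * s - b * Real.exp (2 * s))) (cocompact ℝ) (𝓝 0) := by
  rw [cocompact_eq_atBot_atTop, tendsto_sup]
  constructor
  · refine Real.tendsto_exp_atBot.comp (tendsto_atBot_mono (fun s ↦ ?_)
      (tendsto_id.const_mul_atBot ha))
    simp only [id]
    nlinarith [Real.exp_pos (2 * s)]
  · have h := (tendsto_rpow_mul_exp_neg_mul_atTop_nhds_zero (a / 2) b hb).comp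
      (Real.tendsto_exp_atTop.comp (tendsto_id.const_mul_atTop two_pos))
    refine h.congr fun s ↦ ?_
    simp only [Function.comp_apply, id, Real.rpow_def_of_pos (Real.exp_pos _), Real.log_exp,
      ← Real.exp_add]
    ring_nf

theorem integral_eq_integral_add_mul_I_of_norm_le {E : Type*} [NormedAddCommGroup E]
    [NormedSpace ℂ E] [CompleteSpace E] {f : ℂ → E} {θ : ℝ}
    (hf : DifferentiableOn ℂ f (im ⁻¹' [[0, θ]])) {g : ℝ → ℝ} (hg : Integrable g)
    (hg_tendsto : Tendsto g (cocompact ℝ) (𝓝 0))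
    (hfg : ∀ s : ℝ, ∀ y ∈ [[0, θ]], ‖f (s + y * I)‖ ≤ g s) :
    ∫ s : ℝ, f s = ∫ s : ℝ, f (s + θ * I) := by
  have hint : ∀ y ∈ [[0, θ]], Integrable fun s : ℝ ↦ f (s + y * I) := fun y hy ↦
    hg.mono' (hf.continuousOn.comp_continuous (by fun_prop) fun s ↦ by
      simpa using hy).aestronglyMeasurable (ae_of_all _ fun s ↦ hfg s y hy)
  have hvert : Tendsto (fun T : ℝ ↦ ∫ y in (0 : ℝ)..θ, f (T + y * I)) (cocompact ℝ) (𝓝 0) := by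
    refine squeeze_zero_norm (fun T ↦ intervalIntegral.norm_integral_le_of_norm_le_const
      fun y hy ↦ hfg T y (uIoc_subset_uIcc hy)) ?_
    simpa using hg_tendsto.mul_const |θ - 0|
  have hrect (T : ℝ) : (∫ x in -T..T, f x) - (∫ x in -T..T, f (x + θ * I)) +
      I • (∫ y in (0 : ℝ)..θ, f (T + y * I)) - I • (∫ y in (0 : ℝ)..θ, f (-T + y * I)) = 0 := by
    simpa using integral_boundary_rect_eq_zero_of_differentiableOn f (-T) (T + θ * I)
      (hf.mono fun z hz ↦ by simpa using hz.2)
  have hlim := (((intervalIntegral_tendsto_integral (hint 0 left_mem_uIcc)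
    tendsto_neg_atTop_atBot tendsto_id).sub (intervalIntegral_tendsto_integral
      (hint θ right_mem_uIcc) tendsto_neg_atTop_atBot tendsto_id)).add
    ((hvert.mono_left atTop_le_cocompact).const_smul I)).sub
    (((hvert.mono_left atBot_le_cocompact).comp tendsto_neg_atTop_atBot).const_smul I)
  simp only [ofReal_zero, zero_mul, add_zero, smul_zero, sub_zero] at hlim
  refine sub_eq_zero.mp (tendsto_nhds_unique hlim ?_)
  simp [hrect]

/-- The Fresnel integrand after the substitution `x = exp w`, Jacobian included. -/
noncomputable def logFresnelIntegrand (G : ℂ → ℂ) (χ ϖ ε : ℝ) (w : ℂ) : ℂ :=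
  cexp ((χ + 1) * w + (ϖ * I - ε) * cexp (2 * w)) * G (cexp w)

theorem differentiable_logFresnelIntegrand {G : ℂ → ℂ} (hG : Differentiable ℂ G)
    (χ ϖ ε : ℝ) : Differentiable ℂ (logFresnelIntegrand G χ ϖ ε) := by
  unfold logFresnelIntegrand
  fun_prop

theorem continuous_logFresnelIntegrand_param (G : ℂ → ℂ) (χ ϖ : ℝ) (w : ℂ) :
    Continuous fun ε : ℝ ↦ logFresnelIntegrand G χ ϖ ε w := by
  unfold logFresnelIntegrand
  fun_prop

theorem integral_fresnel_eq_integral_logFresnelIntegrand (G : ℂ → ℂ) (χ ϖ ε : ℝ) :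
    ∫ x in Ioi (0 : ℝ), (x : ℂ) ^ (χ : ℂ) * cexp (I * ϖ * (x : ℂ) ^ 2) *
      cexp (-(ε : ℂ) * (x : ℂ) ^ 2) * G x = ∫ s : ℝ, logFresnelIntegrand G χ ϖ ε s := by
  rw [integral_Ioi_zero_eq_integral_exp_smul_comp_exp]
  congr 1 with s
  have hlog : Complex.log (cexp s) = s :=
    Complex.log_exp (by simp [Real.pi_pos]) (by simp [Real.pi_pos.le])
  simp only [logFresnelIntegrand, Complex.real_smul, Complex.ofReal_exp,
    Complex.cpow_def_of_ne_zero (Complex.exp_ne_zero _), hlog, ← Complex.exp_nat_mul,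
    ← Complex.exp_add]
  rw [← mul_assoc, ← Complex.exp_add]
  push_cast
  ring_nf

theorem norm_cexp_logFresnel (χ ϖ ε : ℝ) (w : ℂ) :
    ‖cexp ((χ + 1) * w + (ϖ * I - ε) * cexp (2 * w))‖ = Real.exp ((χ + 1) * w.re -
      Real.exp (2 * w.re) * (ϖ * Real.sin (2 * w.im) + ε * Real.cos (2 * w.im))) := by
  rw [Complex.norm_exp]
  simp only [add_re, mul_re, ofReal_re, one_re, add_im, ofReal_im, one_im, add_zero, zero_mul,
    sub_zero, sub_re, I_re, mul_zero, I_im, mul_one, sub_self, zero_sub, exp_re, re_ofNat,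
    im_ofNat, mul_im, neg_mul, sub_im, exp_im, exp_eq_exp]
  ring

theorem norm_logFresnelIntegrand_le {G : ℂ → ℂ} {C δ : ℝ}
    (hG : ∀ z, ‖G z‖ ≤ C * Real.exp (δ * ‖z‖ ^ 2)) (χ ϖ ε : ℝ) (w : ℂ)
    (hw : 2 * δ ≤ ϖ * Real.sin (2 * w.im) + ε * Real.cos (2 * w.im)) :
    ‖logFresnelIntegrand G χ ϖ ε w‖ ≤
      C * Real.exp ((χ + 1) * w.re - δ * Real.exp (2 * w.re)) := by
  have hC : 0 ≤ C := nonneg_of_mul_nonneg_left ((norm_nonneg _).trans (hG 0)) (Real.exp_pos _)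
  have hGw : ‖G (cexp w)‖ ≤ C * Real.exp (δ * Real.exp (2 * w.re)) := by
    simpa [Complex.norm_exp, ← Real.exp_nat_mul, mul_comm] using hG (cexp w)
  have he := Real.exp_pos (2 * w.re)
  calc ‖logFresnelIntegrand G χ ϖ ε w‖
      ≤ Real.exp ((χ + 1) * w.re - Real.exp (2 * w.re) * (2 * δ)) *
          (C * Real.exp (δ * Real.exp (2 * w.re))) := by
        rw [logFresnelIntegrand, norm_mul, norm_cexp_logFresnel]
        gcongr
    _ = C * Real.exp ((χ + 1) * w.re - δ * Real.exp (2 * w.re)) := by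
        rw [mul_left_comm, ← Real.exp_add]
        ring_nf

theorem exists_angle_strip {ϖ : ℝ} (hϖ : ϖ ≠ 0) :
    ∃ θ : ℝ, 0 < ϖ * Real.sin (2 * θ) ∧ 0 < Real.cos (2 * θ) ∧
      ∀ y ∈ [[0, θ]], 0 ≤ ϖ * Real.sin (2 * y) ∧ Real.cos (2 * θ) ≤ Real.cos (2 * y) := by
  have hπ := Real.pi_pos
  have hsin : 0 < Real.sin (2 * (π / 8)) :=
    Real.sin_pos_of_pos_of_lt_pi (by positivity) (by linarith)
  have hcos : 0 < Real.cos (2 * (π / 8)) := Real.cos_pos_of_mem_Ioo ⟨by linarith, by linarith⟩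
  have hIcc : ∀ y ∈ Icc 0 (π / 8),
      0 ≤ Real.sin (2 * y) ∧ Real.cos (2 * (π / 8)) ≤ Real.cos (2 * y) :=
    fun y ⟨h0, h1⟩ ↦ ⟨Real.sin_nonneg_of_nonneg_of_le_pi (by linarith) (by linarith),
      Real.cos_le_cos_of_nonneg_of_le_pi (by linarith) (by linarith) (by linarith)⟩
  rcases hϖ.lt_or_gt with hneg | hpos
  · refine ⟨-(π / 8), ?_, ?_, fun y hy ↦ ?_⟩
    · rw [mul_neg, Real.sin_neg]
      nlinarith
    · rwa [mul_neg, Real.cos_neg]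
    · rw [uIcc_of_ge (by linarith)] at hy
      obtain ⟨hsin_y, hcos_y⟩ := hIcc (-y) ⟨by linarith [hy.2], by linarith [hy.1]⟩
      rw [mul_neg, Real.sin_neg] at hsin_y
      rw [mul_neg, Real.cos_neg] at hcos_y ⊢
      exact ⟨by nlinarith, hcos_y⟩
  · refine ⟨π / 8, mul_pos hpos hsin, hcos, fun y hy ↦ ?_⟩
    obtain ⟨hsin_y, hcos_y⟩ := hIcc y (by rwa [uIcc_of_le (by positivity)] at hy)
    exact ⟨mul_nonneg hpos.le hsin_y, hcos_y⟩

def HasOrderTwoTypeZeroGrowth (G : ℂ → ℂ) : Prop :=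
  ∀ δ > (0 : ℝ), ∃ C : ℝ, ∀ z : ℂ, ‖G z‖ ≤ C * Real.exp (δ * ‖z‖ ^ 2)

section StripEstimates

variable {G : ℂ → ℂ} (hgrow : HasOrderTwoTypeZeroGrowth G) {χ : ℝ} (hχ : -1 < χ)
include hgrow hχ

theorem integral_logFresnelIntegrand_eq_integral_add_mul_I (hG : Differentiable ℂ G)
    {ϖ θ ε : ℝ} (hcos : 0 < Real.cos (2 * θ))
    (hstrip : ∀ y ∈ [[0, θ]], 0 ≤ ϖ * Real.sin (2 * y) ∧ Real.cos (2 * θ) ≤ Real.cos (2 * y))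
    (hε : 0 < ε) :
    ∫ s : ℝ, logFresnelIntegrand G χ ϖ ε s =
      ∫ s : ℝ, logFresnelIntegrand G χ ϖ ε (s + θ * I) := by
  have hδ : 0 < ε * Real.cos (2 * θ) / 2 := by positivity
  obtain ⟨C, hC⟩ := hgrow _ hδ
  refine integral_eq_integral_add_mul_I_of_norm_le
    (differentiable_logFresnelIntegrand hG χ ϖ ε).differentiableOn
    ((integrable_exp_mul_sub_mul_exp_two_mul (a := χ + 1) (by linarith) hδ).const_mul C)
    (by simpa using
      (tendsto_exp_mul_sub_mul_exp_two_mul_cocompact (a := χ + 1) (by linarith) hδ).const_mul C)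
    fun s y hy ↦ ?_
  obtain ⟨hsin_y, hcos_y⟩ := hstrip y hy
  simpa using norm_logFresnelIntegrand_le hC χ ϖ ε (s + y * I) (by
    simp only [add_im, ofReal_im, mul_I_im, ofReal_re, zero_add]
    nlinarith [mul_le_mul_of_nonneg_left hcos_y hε.le])

theorem continuousWithinAt_integral_logFresnelIntegrand_add_mul_I (hG : Continuous G)
    {ϖ θ : ℝ} (hsin : 0 < ϖ * Real.sin (2 * θ)) (hcos : 0 ≤ Real.cos (2 * θ)) :
    ContinuousWithinAt (fun ε : ℝ ↦ ∫ s : ℝ, logFresnelIntegrand G χ ϖ ε (s + θ * I))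
      (Ici 0) 0 := by
  have hδ : 0 < ϖ * Real.sin (2 * θ) / 2 := by positivity
  obtain ⟨C, hC⟩ := hgrow _ hδ
  refine tendsto_integral_filter_of_dominated_convergence
    (fun s ↦ C * Real.exp ((χ + 1) * s - ϖ * Real.sin (2 * θ) / 2 * Real.exp (2 * s)))
    (Eventually.of_forall fun ε ↦ Continuous.aestronglyMeasurable ?_) ?_
    ((integrable_exp_mul_sub_mul_exp_two_mul (a := χ + 1) (by linarith) hδ).const_mul C)
    (ae_of_all _ fun s ↦ (continuous_logFresnelIntegrand_param G χ ϖ _).continuousWithinAt)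
  · unfold logFresnelIntegrand
    fun_prop
  · filter_upwards [self_mem_nhdsWithin] with ε (hε : 0 ≤ ε)
    refine ae_of_all _ fun s ↦ ?_
    simpa using norm_logFresnelIntegrand_le hC χ ϖ ε (s + θ * I) (by
      simp only [add_im, ofReal_im, mul_I_im, ofReal_re, zero_add]
      nlinarith [mul_nonneg hε hcos])

end StripEstimates

theorem fresnel_regularization_limit_exists (G : ℂ → ℂ) (hG : Differentiable ℂ G)
    (hgrow : ∀ ε > (0:ℝ), ∃ Cε : ℝ, ∀ z : ℂ, ‖G z‖ ≤ Cε * Real.exp (ε * ‖z‖ ^ 2))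
    (χ : ℝ) (hχ : -1 < χ) (ϖ : ℝ) (hϖ : ϖ ≠ 0) :
    ∃ L : ℂ, Filter.Tendsto
      (fun ε : ℝ => ∫ x in Set.Ioi (0:ℝ),
        (x : ℂ) ^ (χ : ℂ) * Complex.exp (Complex.I * ϖ * (x : ℂ) ^ 2) *
          Complex.exp (-(ε : ℂ) * (x : ℂ) ^ 2) * G x)
      (nhdsWithin 0 (Set.Ioi 0)) (nhds L) := by
  obtain ⟨θ, hsin, hcos, hstrip⟩ := exists_angle_strip hϖ
  have hlim := continuousWithinAt_integral_logFresnelIntegrand_add_mul_I hgrow hχ hG.continuous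
    hsin hcos.le
  refine ⟨_, (hlim.mono Ioi_subset_Ici_self).tendsto.congr' ?_⟩
  filter_upwards [self_mem_nhdsWithin] with ε hε
  rw [integral_fresnel_eq_integral_logFresnelIntegrand,
    integral_logFresnelIntegrand_eq_integral_add_mul_I hgrow hχ hG hcos hstrip hε]
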